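/- For any may-must argumentation F = (A, R, f_Q) in which every argument a has f_Q(a) = ((|pre(a)|, |pre(a)|), (1, 1)) where pre(a) is the set of attackers of a: a total labelling λ on A is an exact labelling of F if and only if λ is a complete labelling of the Dung argumentation framework (A, R), i.e., for every a ∈ A, λ(a) = in iff every attacker of a is labelled out, and λ(a) = out iff some attacker of a is labelled in. -/

import Mathlib

inductive Lab : Type
  | inn | out | undec
deriving DecidableEq

structure MMA (A : Type) [Fintype A] [DecidableEq A] where
  R : A → A → Prop
  decR : DecidableRel R
  n1 : A → ℕ
  n2 : A → ℕ
  m1 : A → ℕ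
  m2 : A → ℕ
  hn : ∀ a, n1 a ≤ n2 a
  hm : ∀ a, m1 a ≤ m2 a

variable {A : Type} [Fintype A] [DecidableEq A]

/-- Number of attackers of `a` labelled `out` by `lam`. -/
def outCnt (F : MMA A) (lam : A → Lab) (a : A) : ℕ :=
  letI := F.decR
  (Finset.univ.filter (fun b => F.R b a ∧ lam b = Lab.out)).card

/-- Number of attackers of `a` labelled `in` by `lam`. -/
def inCnt (F : MMA A) (lam : A → Lab) (a : A) : ℕ :=
  letI := F.decR
  (Finset.univ.filter (fun b => F.R b a ∧ lam b = Lab.inn)).card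

/-- `lam` designates label `l` for argument `a` in `F`. -/
def designates (F : MMA A) (lam : A → Lab) (a : A) : Lab → Prop
  | Lab.inn => F.n1 a ≤ outCnt F lam a ∧ inCnt F lam a < F.m2 a
  | Lab.out => F.m1 a ≤ inCnt F lam a ∧ outCnt F lam a < F.n2 a
  | Lab.undec =>
      (F.n2 a ≤ outCnt F lam a ∧ F.m2 a ≤ inCnt F lam a) ∨
      (F.n1 a ≤ outCnt F lam a ∧ outCnt F lam a < F.n2 a) ∨
      (F.m1 a ≤ inCnt F lam a ∧ inCnt F lam a < F.m2 a) ∨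
      (outCnt F lam a < F.n1 a ∧ inCnt F lam a < F.m1 a)

/-- `a`'s label is proper under `lam`. -/
def proper (F : MMA A) (lam : A → Lab) (a : A) : Prop :=
  designates F lam a (lam a)

/-- Exact labelling: every argument's label is proper. -/
def exactLab (F : MMA A) (lam : A → Lab) : Prop :=
  ∀ a, proper F lam a

/-- Pre-maximally proper labelling. -/
def preMaxProper (F : MMA A) (lam : A → Lab) : Prop :=
  ∀ a, proper F lam a ∨ lam a = Lab.undec

/-- Maximally proper labelling. -/
def maxProper (F : MMA A) (lam : A → Lab) : Prop :=
  preMaxProper F lam ∧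
    ∀ lam', preMaxProper F lam' → ∀ a, proper F lam' a → proper F lam a

/-- The order `⪯` on labellings. -/
def labLE (l1 l2 : A → Lab) : Prop :=
  ∀ a, (l1 a = Lab.inn → l2 a = Lab.inn) ∧ (l1 a = Lab.out → l2 a = Lab.out)

/-- Number of attackers of `a`. -/
def preCard (F : MMA A) (a : A) : ℕ :=
  letI := F.decR
  (Finset.univ.filter (fun b => F.R b a)).card

/-- Complete labelling of the underlying Dung framework. -/
def dungComplete (F : MMA A) (lam : A → Lab) : Prop :=
  ∀ a, (lam a = Lab.inn ↔ ∀ b, F.R b a → lam b = Lab.out) ∧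
       (lam a = Lab.out ↔ ∃ b, F.R b a ∧ lam b = Lab.inn)


/-!
With `n₁ = n₂ = |pre(a)|` and `m₁ = m₂ = 1`, the label `in` is designated for `a` exactly when
all attackers are `out`, `out` exactly when some attacker is `in`, and `undec` exactly when
neither holds. The two conditions exclude each other, so designation of `λ(a)` is precisely the
Dung completeness condition at `a`.
-/

section Counting

variable (F : MMA A) (lam : A → Lab) (a : A)

lemma outCnt_le_preCard : outCnt F lam a ≤ preCard F a := by
  let := F.decR
  exact Finset.card_le_card <| Finset.monotone_filter_right _ fun _ _ hb => hb.1

lemma outCnt_eq_preCard_iff :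
    outCnt F lam a = preCard F a ↔ ∀ b, F.R b a → lam b = Lab.out := by
  let := F.decR
  rw [outCnt, preCard, ← Finset.filter_filter, Finset.card_filter_eq_iff]
  simp only [Finset.mem_filter, Finset.mem_univ, true_and]

lemma inCnt_pos_iff : 0 < inCnt F lam a ↔ ∃ b, F.R b a ∧ lam b = Lab.inn := by
  let := F.decR
  rw [inCnt, Finset.card_pos, Finset.filter_nonempty_iff]
  simp only [Finset.mem_univ, true_and]

lemma not_exists_inn_of_forall_out (hout : ∀ b, F.R b a → lam b = Lab.out) :
    ¬∃ b, F.R b a ∧ lam b = Lab.inn := by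
  rintro ⟨b, hba, hb⟩
  simp [hout b hba] at hb

lemma outCnt_lt_preCard_or_inCnt_eq_zero :
    outCnt F lam a < preCard F a ∨ inCnt F lam a = 0 := by
  rcases (outCnt_le_preCard F lam a).lt_or_eq with hlt | heq
  · exact Or.inl hlt
  · refine Or.inr (Nat.eq_zero_of_not_pos ?_)
    rw [inCnt_pos_iff]
    exact not_exists_inn_of_forall_out F lam a ((outCnt_eq_preCard_iff F lam a).1 heq)

end Counting

section Designation

variable {F : MMA A} {lam : A → Lab} {a : A}

lemma designates_inn_iff (hn1 : F.n1 a = preCard F a) (hm2 : F.m2 a = 1) :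
    designates F lam a Lab.inn ↔ ∀ b, F.R b a → lam b = Lab.out := by
  rw [designates, hn1, hm2, ← outCnt_eq_preCard_iff]
  have := outCnt_le_preCard F lam a
  have := outCnt_lt_preCard_or_inCnt_eq_zero F lam a
  omega

lemma designates_out_iff (hn2 : F.n2 a = preCard F a) (hm1 : F.m1 a = 1) :
    designates F lam a Lab.out ↔ ∃ b, F.R b a ∧ lam b = Lab.inn := by
  rw [designates, hn2, hm1, ← inCnt_pos_iff]
  have := outCnt_lt_preCard_or_inCnt_eq_zero F lam a
  omega

lemma designates_undec_iff (hn1 : F.n1 a = preCard F a) (hn2 : F.n2 a = preCard F a)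
    (hm1 : F.m1 a = 1) (hm2 : F.m2 a = 1) :
    designates F lam a Lab.undec ↔
      ¬(∀ b, F.R b a → lam b = Lab.out) ∧ ¬∃ b, F.R b a ∧ lam b = Lab.inn := by
  rw [designates, hn1, hn2, hm1, hm2, ← outCnt_eq_preCard_iff, ← inCnt_pos_iff]
  have := outCnt_le_preCard F lam a
  have := outCnt_lt_preCard_or_inCnt_eq_zero F lam a
  omega

lemma proper_iff_complete_at (hn1 : F.n1 a = preCard F a) (hn2 : F.n2 a = preCard F a)
    (hm1 : F.m1 a = 1) (hm2 : F.m2 a = 1) :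
    proper F lam a ↔ (lam a = Lab.inn ↔ ∀ b, F.R b a → lam b = Lab.out) ∧
      (lam a = Lab.out ↔ ∃ b, F.R b a ∧ lam b = Lab.inn) := by
  have hexcl := not_exists_inn_of_forall_out F lam a
  rw [proper]
  cases lam a
  · simp only [designates_inn_iff hn1 hm2, true_iff, reduceCtorEq, false_iff]
    exact ⟨fun h => ⟨h, hexcl h⟩, And.left⟩
  · simp only [designates_out_iff hn2 hm1, true_iff, reduceCtorEq, false_iff]
    exact ⟨fun h => ⟨fun hall => hexcl hall h, h⟩, And.right⟩
  · simp only [designates_undec_iff hn1 hn2 hm1 hm2, reduceCtorEq, false_iff]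

end Designation

theorem stmt9 (F : MMA A)
    (h : ∀ a, F.n1 a = preCard F a ∧ F.n2 a = preCard F a ∧ F.m1 a = 1 ∧ F.m2 a = 1) :
    ∀ lam : A → Lab, exactLab F lam ↔ dungComplete F lam := fun _ =>
  forall_congr' fun a =>
    let ⟨hn1, hn2, hm1, hm2⟩ := h a
    proper_iff_complete_at hn1 hn2 hm1 hm2
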